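/- arXiv:2007.15682 — 5 statements merged into one kernel-verified Lean document; each statement's English description precedes it below -/
import Mathlib

section
/- Let n > 1 be an integer that is not a prime power, and let d_1 < ⋯ < d_k < n be divisors of n (with 1 < k) such that d_i ∤ d_j for i ≠ j. Then the number of k-tuples (x_1, …, x_k) ∈ F_{q^{d_1}} × ⋯ × F_{q^{d_k}} (viewed inside F_{q^n}) with x_1 + ⋯ + x_k = 0 equals q^{d_1 + ⋯ + d_k − λ}, where λ = deg(lcm(x^{d_1} − 1, …, x^{d_k} − 1)). -/
/-!
The `q`-Frobenius `F : x ↦ x ^ q` is `𝔽_p`-linear on `K`, and `𝔽_{q^d}` is the kernel of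
`h(F)` for `h = X ^ d - 1`. For every divisor `h` of `X ^ n - 1` this kernel has exactly
`q ^ deg h` elements: at most that many because it consists of roots of the linearized polynomial
`∑ hⱼ X ^ q ^ j`, and at least that many because `X ^ n - 1 = h * r` kills `K`, so the image of
`h(F)` lies in the kernel of `r(F)`. Kernels of `h(F)` turn lcms into sums, so
`𝔽_{q^{d_1}} + ⋯ + 𝔽_{q^{d_k}}` has `q ^ λ` elements, and the zero-sum tuples are the kernel of
the summation map from `∏ 𝔽_{q^{d_i}}` onto this sum.
-/

open Finset Polynomial

/-- `λ(d)`: the degree of `lcm(x^{d_1}-1, …, x^{d_k}-1)` in `F_p[x]`. -/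
noncomputable def lambdaDeg (p k : ℕ) [Fact p.Prime] (d : Fin k → ℕ) : ℕ :=
  ((Finset.univ : Finset (Fin k)).lcm fun i => (X : Polynomial (ZMod p)) ^ d i - 1).natDegree

theorem Nat.eq_pow_sub_of_mul_pow_eq {q a b N : ℕ} (hq : 1 < q) (h : N * q ^ b = q ^ a) :
    N = q ^ (a - b) := by
  have hba : b ≤ a := (Nat.pow_dvd_pow_iff_le_right hq).mp (Dvd.intro_left N h)
  rw [← Nat.sub_add_cancel hba, pow_add] at h
  exact Nat.eq_of_mul_eq_mul_right (by positivity) h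

theorem Fintype.one_lt_of_card_eq_pow {K : Type*} [Fintype K] [Nontrivial K] {q n : ℕ}
    (hK : Fintype.card K = q ^ n) : 1 < q :=
  lt_of_pow_lt_pow_left₀ n q.zero_le (by simpa [hK] using Fintype.one_lt_card (α := K))

namespace LinearMap

variable {R M N P : Type*} [Ring R] [AddCommGroup M] [AddCommGroup N] [AddCommGroup P]
  [Module R M] [Module R N] [Module R P]

theorem card_ker_mul_card_range (f : M →ₗ[R] N) :
    Nat.card (ker f) * Nat.card (range f) = Nat.card M := by
  rw [(ker f).card_eq_card_quotient_mul_card, Nat.card_congr f.quotKerEquivRange.toEquiv]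

theorem card_ker_eq_of_comp_eq_zero [Finite M] [Finite N] {f : M →ₗ[R] N} {g : N →ₗ[R] P}
    (hgf : g ∘ₗ f = 0) {a b : ℕ} (hf : Nat.card (ker f) ≤ a) (hg : Nat.card (ker g) ≤ b)
    (hM : Nat.card M = a * b) : Nat.card (ker f) = a := by
  have hrange : Nat.card (range f) ≤ b :=
    (Nat.card_le_card_of_injective _
      (Submodule.inclusion_injective (range_le_ker_iff.mpr hgf : range f ≤ ker g))).trans hg
  have hb : 0 < b := Nat.pos_of_mul_pos_left (hM ▸ Nat.card_pos)
  have : a * b ≤ Nat.card (ker f) * b := by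
    rw [← hM, ← card_ker_mul_card_range f]
    exact Nat.mul_le_mul_left _ hrange
  exact hf.antisymm (Nat.le_of_mul_le_mul_right this hb)

end LinearMap

namespace Submodule

variable {ι R M : Type*} [Fintype ι] [Ring R] [AddCommGroup M] [Module R M]

theorem range_lsum_subtype [DecidableEq ι] (V : ι → Submodule R M) :
    LinearMap.range (LinearMap.lsum R (fun i ↦ V i) ℕ fun i ↦ (V i).subtype) = ⨆ i, V i := by
  ext x
  simpa [LinearMap.lsum_apply, eq_comm] using (mem_iSup_finset_iff_exists_sum (s := univ) V x).symm

theorem card_zero_sum_mul_card_iSup (V : ι → Submodule R M) [∀ i, Finite (V i)] :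
    Nat.card {x : ι → M // (∀ i, x i ∈ V i) ∧ ∑ i, x i = 0} * Nat.card (⨆ i, V i : Submodule R M)
      = ∏ i, Nat.card (V i) := by
  classical
  let σ := LinearMap.lsum R (fun i ↦ V i) ℕ fun i ↦ (V i).subtype
  have hker : {x : ι → M // (∀ i, x i ∈ V i) ∧ ∑ i, x i = 0} ≃ LinearMap.ker σ :=
    { toFun x := ⟨fun i ↦ ⟨x.1 i, x.2.1 i⟩, by simpa [σ, LinearMap.lsum_apply] using x.2.2⟩
      invFun y := ⟨fun i ↦ y.1 i, fun i ↦ (y.1 i).2, by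
        simpa [σ, LinearMap.lsum_apply] using y.2⟩
      left_inv _ := rfl
      right_inv _ := rfl }
  rw [Nat.card_congr hker, ← range_lsum_subtype, LinearMap.card_ker_mul_card_range, Nat.card_pi]

end Submodule

namespace Polynomial

variable {k M : Type*} [Field k] [AddCommGroup M] [Module k M] (f : Module.End k M)

theorem ker_aeval_mono {a b : k[X]} (hab : a ∣ b) :
    LinearMap.ker (aeval f a) ≤ LinearMap.ker (aeval f b) := by
  obtain ⟨c, rfl⟩ := hab
  intro x hx
  rw [LinearMap.mem_ker] at hx ⊢
  rw [mul_comm, map_mul, Module.End.mul_apply, hx, map_zero]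

/-- The cofactors `lcm a b / a` and `lcm a b / b` are coprime, and a Bézout identity between them
splits every `x` killed by `lcm a b` into a part killed by `a` and a part killed by `b`. -/
theorem ker_aeval_lcm [DecidableEq k] (a b : k[X]) :
    LinearMap.ker (aeval f (lcm a b)) = LinearMap.ker (aeval f a) ⊔ LinearMap.ker (aeval f b) := by
  rcases eq_or_ne a 0 with rfl | ha
  · simp
  rcases eq_or_ne b 0 with rfl | hb
  · simp
  refine le_antisymm ?_ (sup_le (ker_aeval_mono f (dvd_lcm_left a b))
    (ker_aeval_mono f (dvd_lcm_right a b)))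
  have hl : lcm a b ≠ 0 := lcm_ne_zero_iff.mpr ⟨ha, hb⟩
  obtain ⟨u, hu⟩ := dvd_lcm_left a b
  obtain ⟨w, hw⟩ := dvd_lcm_right a b
  have hcop : IsCoprime u w := by
    rw [← isRelPrime_iff_isCoprime]
    rintro z ⟨u', rfl⟩ ⟨w', rfl⟩
    have hz : z ≠ 0 := by rintro rfl; simp_all
    have hm : a * u' = b * w' :=
      mul_left_cancel₀ hz (by linear_combination -hu + hw)
    have : z * (a * u') ∣ 1 * (a * u') := by
      rw [one_mul]
      convert lcm_dvd (dvd_mul_right a u') (hm ▸ dvd_mul_right b w') using 1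
      linear_combination -hu
    exact isUnit_of_dvd_one ((mul_dvd_mul_iff_right (by rintro h; simp_all)).mp this)
  obtain ⟨α, β, hαβ⟩ := hcop
  intro x hx
  rw [LinearMap.mem_ker] at hx
  have hkill : ∀ c : k[X], aeval f (c * lcm a b) x = 0 := fun c ↦ by
    rw [map_mul, Module.End.mul_apply, hx, map_zero]
  refine Submodule.mem_sup.mpr ⟨aeval f (α * u) x, ?_, aeval f (β * w) x, ?_, ?_⟩
  · rw [LinearMap.mem_ker, ← Module.End.mul_apply, ← map_mul, ← hkill α]
    congr 2
    linear_combination -α * hu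
  · rw [LinearMap.mem_ker, ← Module.End.mul_apply, ← map_mul, ← hkill β]
    congr 2
    linear_combination -β * hw
  · rw [← LinearMap.add_apply, ← map_add, hαβ, map_one, Module.End.one_apply]

theorem ker_aeval_finset_lcm [DecidableEq k] {ι : Type*} (s : Finset ι) (g : ι → k[X]) :
    LinearMap.ker (aeval f (s.lcm g)) = ⨆ i ∈ s, LinearMap.ker (aeval f (g i)) := by
  classical
  induction s using Finset.induction_on with
  | empty => simp [Module.End.one_eq_id]
  | insert i s _ ih => rw [Finset.lcm_insert, ker_aeval_lcm, ih, Finset.iSup_insert]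

end Polynomial

noncomputable def linearizedAssociate {k : Type*} (K : Type*) [Field k] [Field K] [Algebra k K]
    (q : ℕ) (h : k[X]) : K[X] :=
  ∑ j ∈ range (h.natDegree + 1), C (algebraMap k K (h.coeff j)) * X ^ q ^ j

section Frobenius

variable {k K : Type*} [Field k] [Field K] [Algebra k K] {q : ℕ} {F : Module.End k K}

theorem pow_apply_eq_pow_pow (hF : ∀ x, F x = x ^ q) (j : ℕ) (x : K) :
    (F ^ j) x = x ^ q ^ j := by
  induction j generalizing x with
  | zero => simp
  | succ j ih => rw [pow_succ, Module.End.mul_apply, ih, hF, ← pow_mul, ← pow_succ']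

theorem mem_ker_aeval_X_pow_sub_one (hF : ∀ x, F x = x ^ q) (m : ℕ) (x : K) :
    x ∈ LinearMap.ker (aeval F (X ^ m - 1 : k[X])) ↔ x ^ q ^ m = x := by
  rw [LinearMap.mem_ker, map_sub, aeval_X_pow, map_one, LinearMap.sub_apply,
    Module.End.one_apply, pow_apply_eq_pow_pow hF, sub_eq_zero]

theorem eval_linearizedAssociate (hF : ∀ x, F x = x ^ q) (h : k[X]) (x : K) :
    (linearizedAssociate K q h).eval x = aeval F h x := by
  rw [aeval_eq_sum_range, LinearMap.sum_apply, linearizedAssociate, eval_finsetSum]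
  refine sum_congr rfl fun j _ ↦ ?_
  rw [eval_mul, eval_C, eval_pow, eval_X, LinearMap.smul_apply, pow_apply_eq_pow_pow hF,
    Algebra.smul_def]

variable (K) in
theorem natDegree_linearizedAssociate_le (hq : 0 < q) (h : k[X]) :
    (linearizedAssociate K q h).natDegree ≤ q ^ h.natDegree := by
  refine natDegree_sum_le_of_forall_le _ _ fun j hj ↦ (natDegree_C_mul_le _ _).trans ?_
  rw [natDegree_X_pow]
  exact Nat.pow_le_pow_right hq (Nat.lt_succ_iff.mp (mem_range.mp hj))

variable (K) in
theorem coeff_linearizedAssociate_pow_natDegree (hq : 1 < q) (h : k[X]) :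
    (linearizedAssociate K q h).coeff (q ^ h.natDegree) = algebraMap k K h.leadingCoeff := by
  rw [linearizedAssociate, finsetSum_coeff, sum_eq_single_of_mem _ (self_mem_range_succ _)]
  · simp
  · intro j _ hj
    simp [coeff_X_pow, (Nat.pow_right_injective hq).ne hj.symm]

variable (K) in
theorem linearizedAssociate_ne_zero (hq : 1 < q) {h : k[X]} (hh : h ≠ 0) :
    linearizedAssociate K q h ≠ 0 := by
  intro h0
  have := coeff_linearizedAssociate_pow_natDegree K hq h
  rw [h0, coeff_zero, eq_comm, map_eq_zero_iff _ (algebraMap k K).injective] at this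
  exact leadingCoeff_ne_zero.mpr hh this

theorem card_ker_aeval_le (hF : ∀ x, F x = x ^ q) (hq : 1 < q) {h : k[X]} (hh : h ≠ 0) :
    Nat.card (LinearMap.ker (aeval F h)) ≤ q ^ h.natDegree := by
  have hsub : (LinearMap.ker (aeval F h) : Set K) ⊆ (linearizedAssociate K q h).rootSet K := by
    intro x hx
    rw [mem_rootSet, aeval_def, Algebra.algebraMap_self, eval₂_id, eval_linearizedAssociate hF]
    exact ⟨linearizedAssociate_ne_zero K hq hh, hx⟩
  calc Nat.card (LinearMap.ker (aeval F h))
      ≤ ((linearizedAssociate K q h).rootSet K).ncard :=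
        Set.ncard_le_ncard hsub (rootSet_finite _ _)
    _ ≤ (linearizedAssociate K q h).natDegree := ncard_rootSet_le _ _
    _ ≤ q ^ h.natDegree := natDegree_linearizedAssociate_le K (by omega) h

theorem card_ker_aeval_of_dvd [Fintype K] (hF : ∀ x, F x = x ^ q) {n : ℕ}
    (hK : Fintype.card K = q ^ n) {h : k[X]} (hh : h ∣ X ^ n - 1) :
    Nat.card (LinearMap.ker (aeval F h)) = q ^ h.natDegree := by
  have hq : 1 < q := Fintype.one_lt_of_card_eq_pow hK
  have hn : n ≠ 0 := by
    rintro rfl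
    exact (Fintype.one_lt_card (α := K)).ne' (hK.trans (pow_zero q))
  obtain ⟨r, hr⟩ := hh
  have hXn : (X ^ n - 1 : k[X]) ≠ 0 := by
    simpa using X_pow_sub_C_ne_zero (Nat.pos_of_ne_zero hn) (1 : k)
  have hh0 : h ≠ 0 := left_ne_zero_of_mul (hr ▸ hXn)
  have hr0 : r ≠ 0 := right_ne_zero_of_mul (hr ▸ hXn)
  refine LinearMap.card_ker_eq_of_comp_eq_zero (g := aeval F r) ?_ (card_ker_aeval_le hF hq hh0)
    (card_ker_aeval_le hF hq hr0) ?_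
  · rw [← Module.End.mul_eq_comp, ← map_mul, mul_comm, ← hr]
    exact LinearMap.ext fun x ↦ (mem_ker_aeval_X_pow_sub_one hF n x).mpr (hK ▸ FiniteField.pow_card x)
  · rw [Nat.card_eq_fintype_card, hK, ← pow_add, ← natDegree_mul hh0 hr0, ← hr, ← C_1,
      natDegree_X_pow_sub_C]

end Frobenius

theorem count_zero_sums_general (p s q n k : ℕ) [Fact p.Prime] (hq : q = p ^ s)
    (K : Type*) [Field K] [Fintype K] (hK : Fintype.card K = q ^ n)
    (d : Fin k → ℕ) (hdvd : ∀ i, d i ∣ n) :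
    Nat.card {x : Fin k → K // (∀ i, x i ^ q ^ d i = x i) ∧ ∑ i, x i = 0}
      = q ^ ((∑ i, d i) - lambdaDeg p k d) := by
  have : CharP K p := charP_of_card_eq_prime_pow (f := s * n) (by rw [hK, hq, pow_mul])
  let _ : Algebra (ZMod p) K := ZMod.algebra K p
  let F : Module.End (ZMod p) K := (iterateFrobenius K p s : K →+ K).toZModLinearMap p
  have hF : ∀ x, F x = x ^ q := fun x ↦ by simp [F, hq, iterateFrobenius_def]
  have hdiv i : (X ^ d i - 1 : (ZMod p)[X]) ∣ X ^ n - 1 := by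
    obtain ⟨m, hm⟩ := hdvd i
    simpa [hm, pow_mul] using sub_dvd_pow_sub_pow (X ^ d i : (ZMod p)[X]) 1 m
  let V i := LinearMap.ker (aeval F (X ^ d i - 1 : (ZMod p)[X]))
  have hV i : Nat.card (V i) = q ^ d i := by
    rw [card_ker_aeval_of_dvd hF hK (hdiv i), ← C_1, natDegree_X_pow_sub_C]
  have hsup : Nat.card (⨆ i, V i : Submodule (ZMod p) K) = q ^ lambdaDeg p k d := by
    have := ker_aeval_finset_lcm F univ fun i ↦ (X ^ d i - 1 : (ZMod p)[X])
    simp only [mem_univ, iSup_pos] at this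
    rw [← this]
    exact card_ker_aeval_of_dvd hF hK (Finset.lcm_dvd fun i _ ↦ hdiv i)
  have hcount := Submodule.card_zero_sum_mul_card_iSup V
  rw [hsup, prod_congr rfl fun i _ ↦ hV i, prod_pow_eq_pow_sum] at hcount
  simp only [V, mem_ker_aeval_X_pow_sub_one hF] at hcount
  exact Nat.eq_pow_sub_of_mul_pow_eq (Fintype.one_lt_of_card_eq_pow hK) hcount

/-- The number of k-tuples `(x_1,…,x_k) ∈ F_{q^{d_1}} × ⋯ × F_{q^{d_k}}` (inside `F_{q^n}`)
with `x_1 + ⋯ + x_k = 0` equals `q^{d_1+⋯+d_k-λ}` where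
`λ = deg lcm(x^{d_1}-1,…,x^{d_k}-1)`. -/
theorem count_zero_sums (p s q n k : ℕ) [Fact p.Prime] (hs : 0 < s) (hq : q = p ^ s)
    (hn : 1 < n) (hnpp : ¬ IsPrimePow n) (hk : 1 < k)
    (K : Type*) [Field K] [Fintype K] (hK : Fintype.card K = q ^ n)
    (d : Fin k → ℕ) (hmono : StrictMono d) (hdvd : ∀ i, d i ∣ n) (hlt : ∀ i, d i < n)
    (hnd : ∀ i j, i ≠ j → ¬ d i ∣ d j) :
    Nat.card {x : Fin k → K // (∀ i, x i ^ q ^ d i = x i) ∧ ∑ i, x i = 0}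
      = q ^ ((∑ i, d i) - lambdaDeg p k d) :=
  count_zero_sums_general p s q n k hq K hK d hdvd
end

section
/- For all integers t ≥ 3, the number W(t−1) of squarefree divisors of t−1 satisfies W(t−1) < t^{0.96/log log t}. -/
/-!
With `k = ω(t - 1)` we have `W(t - 1) = 2 ^ k`, so the claim is `log 2 · k · log X < 0.96 X`
for `X = log t`. As `x / log x` increases on `[e, ∞)` and `X` exceeds `T = ∑_{p ∣ t - 1} log p`,
it suffices to prove the inequality for `T`, the log of a product of `k` distinct primes.
For `4 ≤ k ≤ 39` that product is at least the product of the first `k` primes, and the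
inequality is checked from certified bounds for `exp`; the tightest case is `k = 9`, with a
margin below 0.1%. For `k ≥ 40` we induct, removing the largest prime `q`: the other primes lie
below `q`, so by Chebyshev's bound `primorial q ≤ 4 ^ q` their log-sum `T'` satisfies
`log q ≥ log T' - log log 4`, which is enough once `T' ≥ 151`.
-/

/-- `W(m)`: the number of squarefree divisors of `m`. -/
def W (m : ℕ) : ℕ := (m.divisors.filter Squarefree).card

open Finset Real

theorem W_eq_two_pow_card_primeFactors {m : ℕ} (hm : m ≠ 0) : W m = 2 ^ #m.primeFactors := by
  rw [W, card_def, Nat.divisors_filter_squarefree hm, Multiset.card_map, ← card_def,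
    card_powerset, Nat.factors_eq]
  rfl

theorem two_pow_lt_rpow_of_log_two_mul_lt {k : ℕ} {c t : ℝ} (ht : 0 < t) (hlog : 1 < log t)
    (h : log 2 * k * log (log t) < c * log t) : (2 : ℝ) ^ k < t ^ (c / log (log t)) := by
  have hll : 0 < log (log t) := log_pos hlog
  rw [lt_rpow_iff_log_lt (by positivity) ht, Real.log_pow, div_mul_eq_mul_div,
    lt_div_iff₀ hll]
  linarith

theorem log_two_mul_mul_log_lt_of_le_three {k : ℕ} (hk : k ≤ 3) {x : ℝ} (hx : 1 < x) :
    log 2 * k * log x < 0.96 * x := by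
  have hx0 : 0 < x := by linarith
  have hlog : log x ≤ x / exp 1 := by
    have := log_le_sub_one_of_pos (div_pos hx0 (exp_pos 1))
    rw [log_div hx0.ne' (exp_ne_zero 1), log_exp] at this
    linarith
  have hx_div : x / exp 1 < x / 2.7182818283 :=
    div_lt_div_of_pos_left hx0 (by norm_num) exp_one_gt_d9
  calc log 2 * k * log x ≤ 0.6931471808 * 3 * (x / 2.7182818283) := by
        gcongr
        · exact (log_pos hx).le
        · exact log_two_lt_d9.le
        · exact_mod_cast hk
        · exact hlog.trans hx_div.le
    _ < 0.96 * x := by norm_num; linarith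

theorem mul_log_lt_mul_of_le {B c x y : ℝ} (hB : 0 ≤ B) (hx : exp 1 ≤ x) (hxy : x ≤ y)
    (h : B * log x < c * x) : B * log y < c * y := by
  have hx0 : 0 < x := (exp_pos 1).trans_le hx
  have hy0 : 0 < y := hx0.trans_le hxy
  have hanti : log y / y ≤ log x / x := log_div_self_antitoneOn hx (hx.trans hxy) hxy
  calc B * log y = B * y * (log y / y) := by field_simp
    _ ≤ B * y * (log x / x) := by gcongr
    _ = B * log x * (y / x) := by ring
    _ < c * x * (y / x) := by gcongr
    _ = c * y := by field_simp

-- Rational bounds for `exp (a / 1024)`, from ten-digit bounds for `e` and `e ^ (1 / 1024)`.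
def expUpper (a : ℕ) : ℚ := 2.7182818286 ^ (a / 1024) * 1.0009770395 ^ (a % 1024)
def expLower (a : ℕ) : ℚ := 2.7182818283 ^ (a / 1024) * 1.0009770394 ^ (a % 1024)

theorem exp_nat_div_eq (a : ℕ) :
    exp (a / 1024) = exp 1 ^ (a / 1024) * exp (1 / 1024) ^ (a % 1024) := by
  rw [← exp_nat_mul, ← exp_nat_mul, ← exp_add]
  congr 1
  conv_lhs => rw [← Nat.div_add_mod a 1024]
  push_cast
  ring

theorem exp_nat_div_le_expUpper (a : ℕ) : exp (a / 1024) ≤ expUpper a := by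
  have hr : exp (1 / 1024) ≤ 1.0009770395 := by
    refine le_of_pow_le_pow_left₀ (n := 1024) (by norm_num) (by norm_num) ?_
    rw [← exp_nat_mul]
    norm_num
    exact exp_one_lt_d9.le.trans (by rw [show 1024 = 256 * 4 from rfl, pow_mul]; norm_num)
  rw [exp_nat_div_eq, expUpper]
  push_cast
  gcongr
  exact exp_one_lt_d9.le

theorem expLower_le_exp_nat_div (a : ℕ) : (expLower a : ℝ) ≤ exp (a / 1024) := by
  have hr : (1.0009770394 : ℝ) ≤ exp (1 / 1024) := by
    refine le_of_pow_le_pow_left₀ (n := 1024) (by norm_num) (exp_pos _).le ?_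
    rw [← exp_nat_mul]
    norm_num
    exact le_trans (by rw [show 1024 = 256 * 4 from rfl, pow_mul]; norm_num) exp_one_gt_d9.le
  rw [exp_nat_div_eq, expLower]
  push_cast
  gcongr
  exact exp_one_gt_d9.le

theorem prod_primesLE_le_prod {S : Finset ℕ} (hS : ∀ p ∈ S, p.Prime) {n : ℕ}
    (hcard : #(Nat.primesLE n) ≤ #S) : ∏ p ∈ Nat.primesLE n, p ≤ ∏ p ∈ S, p := by
  induction n generalizing S with
  | zero => simpa using one_le_prod' fun p hp ↦ (hS p hp).one_le
  | succ n ih =>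
    rw [Nat.primesLE_succ] at hcard ⊢
    split_ifs at hcard ⊢ with hn
    · rw [card_insert_of_notMem (Nat.notMem_primesLE n)] at hcard
      have hne : S.Nonempty := card_pos.1 (by omega)
      have hmax : n + 1 ≤ S.max' hne := by
        by_contra! hlt
        have hsub : S ⊆ Nat.primesLE n := fun p hp ↦
          Nat.mem_primesLE.2 ⟨Nat.lt_succ_iff.1 ((S.le_max' p hp).trans_lt hlt), hS p hp⟩
        have := card_le_card hsub
        omega
      rw [prod_insert (Nat.notMem_primesLE n), ← mul_prod_erase S (fun p ↦ p) (S.max'_mem hne)]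
      refine Nat.mul_le_mul hmax (ih (fun p hp ↦ hS p (mem_of_mem_erase hp)) ?_)
      rw [card_erase_of_mem (S.max'_mem hne)]
      omega
    · exact ih hS hcard

theorem primorial_le_prod {S : Finset ℕ} (hS : ∀ p ∈ S, p.Prime) {n : ℕ}
    (hcard : Nat.primeCounting n ≤ #S) : primorial n ≤ ∏ p ∈ S, p := by
  rw [← Nat.primesLE_card_eq_primeCounting] at hcard
  exact prod_primesLE_le_prod hS hcard

theorem prod_le_four_pow {S : Finset ℕ} (hS : ∀ p ∈ S, p.Prime) {n : ℕ}
    (hle : ∀ p ∈ S, p ≤ n) : ∏ p ∈ S, p ≤ 4 ^ n :=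
  calc ∏ p ∈ S, p ≤ ∏ p ∈ Nat.primesLE n, p :=
        prod_le_prod_of_subset_of_one_le' (fun p hp ↦ Nat.mem_primesLE.2 ⟨hle p hp, hS p hp⟩)
          fun _ hp _ ↦ (Nat.prime_of_mem_primesLE hp).one_le
    _ ≤ 4 ^ n := primorial_le_four_pow n

theorem log_prod_eq_sum_log {S : Finset ℕ} (hS : ∀ p ∈ S, p.Prime) :
    log (∏ p ∈ S, p : ℕ) = ∑ p ∈ S, log p := by
  rw [Nat.cast_prod, log_prod fun p hp ↦ Nat.cast_ne_zero.2 (hS p hp).ne_zero]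

theorem le_log_of_expUpper_le {x : ℝ} {a : ℕ} (h : (expUpper a : ℝ) ≤ x) :
    (a : ℝ) / 1024 ≤ log x := by
  have hexp := (exp_nat_div_le_expUpper a).trans h
  rwa [le_log_iff_exp_le ((exp_pos _).trans_le hexp)]

theorem log_le_of_le_expLower {x : ℝ} (hx : 0 < x) {b : ℕ} (h : x ≤ expLower b) :
    log x ≤ (b : ℝ) / 1024 :=
  (log_le_iff_le_exp hx).2 (h.trans (expLower_le_exp_nat_div b))

/-- A certificate that `log 2 * k * log L < 0.96 * L` whenever `L` is the log of a product of
`k ≥ π p` distinct primes: then `L ≥ log (primorial p) ≥ a / 1024 ≥ 3 > e`, and at `a / 1024`,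
where `log (a / 1024) ≤ b / 1024`, the last conjunct gives the inequality. -/
def ValidCert (k p a b : ℕ) : Prop :=
  Nat.primeCounting p ≤ k ∧ expUpper a ≤ primorial p ∧ (a : ℚ) / 1024 ≤ expLower b ∧
    3 * 1024 ≤ a ∧ (0.6931471808 : ℚ) * k * b < 0.96 * a

instance (k p a b : ℕ) : Decidable (ValidCert k p a b) := by unfold ValidCert; infer_instance

namespace ValidCert

variable {k p a b : ℕ}

theorem le_sum_log (h : ValidCert k p a b) {S : Finset ℕ} (hS : ∀ q ∈ S, q.Prime)
    (hk : k ≤ #S) : (a : ℝ) / 1024 ≤ ∑ q ∈ S, log q := by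
  rw [← log_prod_eq_sum_log hS]
  refine le_log_of_expUpper_le ?_
  calc (expUpper a : ℝ) ≤ primorial p := by exact_mod_cast h.2.1
    _ ≤ (∏ q ∈ S, q : ℕ) := by exact_mod_cast primorial_le_prod hS (h.1.trans hk)

theorem log_two_mul_log_sum_log_lt (h : ValidCert k p a b) {S : Finset ℕ}
    (hS : ∀ q ∈ S, q.Prime) (hk : #S = k) :
    log 2 * k * log (∑ q ∈ S, log q) < 0.96 * ∑ q ∈ S, log q := by
  have hle := h.le_sum_log hS hk.ge
  obtain ⟨-, -, hlower, ha, hlin⟩ := h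
  set x : ℝ := a / 1024
  have hx : 3 ≤ x := by
    rw [le_div_iff₀ (by norm_num)]
    exact_mod_cast ha
  have hlogx : log x ≤ b / 1024 :=
    log_le_of_le_expLower (by positivity) (by simpa using (Rat.cast_le (K := ℝ)).2 hlower)
  have hlin : (0.6931471808 : ℝ) * k * b < 0.96 * a := by
    simpa using (Rat.cast_lt (K := ℝ)).2 hlin
  refine mul_log_lt_mul_of_le (by positivity) (exp_one_lt_d9.le.trans (by linarith))
    hle ?_
  calc log 2 * k * log x ≤ 0.6931471808 * k * (b / 1024) := by
        gcongr
        · exact log_nonneg (by linarith)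
        · exact log_two_lt_d9.le
    _ < 0.96 * x := by simp only [x]; linarith

end ValidCert

/-- `p` is the `k`-th prime, and `a / 1024`, `b / 1024` round `log (primorial p)` and its log
down and up. -/
theorem exists_validCert {k : ℕ} (h4 : 4 ≤ k) (h39 : k ≤ 39) : ∃ p a b, ValidCert k p a b := by
  interval_cases k
  exacts [
    ⟨7, 5475, 1717, by decide +kernel⟩, ⟨11, 7930, 2097, by decide +kernel⟩,
    ⟨13, 10557, 2390, by decide +kernel⟩, ⟨17, 13458, 2638, by decide +kernel⟩,
    ⟨19, 16473, 2845, by decide +kernel⟩, ⟨23, 19684, 3028, by decide +kernel⟩,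
    ⟨29, 23132, 3193, by decide +kernel⟩, ⟨31, 26648, 3338, by decide +kernel⟩,
    ⟨37, 30346, 3471, by decide +kernel⟩, ⟨41, 34149, 3592, by decide +kernel⟩,
    ⟨43, 38000, 3701, by decide +kernel⟩, ⟨47, 41943, 3802, by decide +kernel⟩,
    ⟨53, 46008, 3897, by decide +kernel⟩, ⟨59, 50184, 3986, by decide +kernel⟩,
    ⟨61, 54393, 4068, by decide +kernel⟩, ⟨67, 58699, 4146, by decide +kernel⟩,
    ⟨71, 63064, 4220, by decide +kernel⟩, ⟨73, 67457, 4289, by decide +kernel⟩,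
    ⟨79, 71932, 4355, by decide +kernel⟩, ⟨83, 76457, 4417, by decide +kernel⟩,
    ⟨89, 81053, 4477, by decide +kernel⟩, ⟨97, 85737, 4534, by decide +kernel⟩,
    ⟨101, 90463, 4589, by decide +kernel⟩, ⟨103, 95209, 4642, by decide +kernel⟩,
    ⟨107, 99994, 4692, by decide +kernel⟩, ⟨109, 104798, 4740, by decide +kernel⟩,
    ⟨113, 109639, 4786, by decide +kernel⟩, ⟨127, 114599, 4831, by decide +kernel⟩,
    ⟨131, 119592, 4875, by decide +kernel⟩, ⟨137, 124630, 4917, by decide +kernel⟩,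
    ⟨139, 129683, 4958, by decide +kernel⟩, ⟨149, 134807, 4998, by decide +kernel⟩,
    ⟨151, 139944, 5036, by decide +kernel⟩, ⟨157, 145122, 5073, by decide +kernel⟩,
    ⟨163, 150338, 5109, by decide +kernel⟩, ⟨167, 155579, 5144, by decide +kernel⟩]

theorem log_two_mul_log_lt_step {j T δ : ℝ} (hj : 0 ≤ j) (hT : 151 ≤ T)
    (hδ : log T - 335 / 1024 ≤ δ) (ih : log 2 * j * log T < 0.96 * T) :
    log 2 * (j + 1) * log (T + δ) < 0.96 * (T + δ) := by
  have hT0 : 0 < T := by linarith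
  have hu : 5 ≤ log T := by
    have h151 : (expUpper 5120 : ℝ) ≤ 151 := by
      exact_mod_cast (by decide +kernel : expUpper 5120 ≤ 151)
    exact le_of_eq_of_le (by norm_num) (le_log_of_expUpper_le (h151.trans hT))
  set u := log T
  have hδ0 : 0 < δ := by linarith
  have hlog : log (T + δ) ≤ u + δ / T := by
    have := log_le_sub_one_of_pos (show 0 < (T + δ) / T by positivity)
    rw [log_div (by positivity) hT0.ne', add_div, div_self hT0.ne'] at this
    linarith
  have hA := log_two_lt_d9
  have hA0 : 0 < log 2 := log_pos one_lt_two
  calc log 2 * (j + 1) * log (T + δ) ≤ log 2 * (j + 1) * (u + δ / T) := by gcongr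
    _ = log 2 * (j + 1) * (u * T + δ) / T := by field_simp
    _ < 0.96 * (T + δ) := by
      -- Times `T`, the left side is `log 2 * j * u * T + log 2 * (u * T + (j + 1) * δ)`: the first
      -- term is below `0.96 T²` by `ih`, the second below `0.96 T δ` as `log 2 * j < 0.96 T / u`,
      -- `δ ≥ u - 0.33`, `u ≥ 5` and `T ≥ 151`.
      rw [div_lt_iff₀ hT0]
      nlinarith [mul_lt_mul_of_pos_right ih hT0, mul_lt_mul_of_pos_right ih hδ0,
        mul_nonneg (mul_nonneg (mul_nonneg hA0.le hj) hδ0.le) (by linarith : (0:ℝ) ≤ u - 5),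
        mul_le_mul_of_nonneg_right hA.le (mul_nonneg (by linarith : (0:ℝ) ≤ u) hT0.le),
        mul_le_mul_of_nonneg_right hA.le hδ0.le,
        mul_nonneg (by linarith : (0:ℝ) ≤ δ - (u - 335/1024)) hT0.le,
        mul_nonneg hδ0.le (by linarith : (0:ℝ) ≤ T - 151),
        mul_nonneg (by linarith : (0:ℝ) ≤ u - 5) hT0.le]

theorem log_log_four_le : log (log 4) ≤ 335 / 1024 := by
  refine le_of_le_of_eq (b := ((335 : ℕ) : ℝ) / 1024)
    (log_le_of_le_expLower (log_pos (by norm_num)) ?_) (by norm_num)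
  calc log 4 = 2 * log 2 := by
        rw [show (4 : ℝ) = 2 ^ 2 by norm_num, Real.log_pow]; norm_num
    _ ≤ (1.3863 : ℚ) := by push_cast; linarith [log_two_lt_d9]
    _ ≤ expLower 335 := by exact_mod_cast (by decide +kernel : (1.3863 : ℚ) ≤ expLower 335)

theorem log_two_mul_card_mul_log_sum_log_lt {S : Finset ℕ} (hS : ∀ p ∈ S, p.Prime)
    (h4 : 4 ≤ #S) : log 2 * #S * log (∑ p ∈ S, log p) < 0.96 * ∑ p ∈ S, log p := by
  induction S using Finset.induction_on_max with
  | empty => simp at h4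
  | insert q S hlt ih =>
    have hq : q ∉ S := fun h ↦ (hlt q h).false
    have hSp : ∀ p ∈ S, p.Prime := fun p hp ↦ hS p (mem_insert_of_mem hp)
    by_cases h39 : #(insert q S) ≤ 39
    · obtain ⟨p, a, b, hc⟩ := exists_validCert h4 h39
      exact hc.log_two_mul_log_sum_log_lt hS rfl
    rw [card_insert_of_notMem hq] at h39 ⊢
    have hT : 151 ≤ ∑ p ∈ S, log p := by
      have h := (by decide +kernel : ValidCert 39 167 155579 5144).le_sum_log hSp (by omega)
      norm_num at h
      linarith
    have hsum_le : ∑ p ∈ S, log p ≤ q * log 4 := by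
      rw [← log_prod_eq_sum_log hSp, ← Real.log_pow]
      exact log_le_log (by exact_mod_cast prod_pos fun p hp ↦ (hSp p hp).pos)
        (by exact_mod_cast prod_le_four_pow hSp fun p hp ↦ (hlt p hp).le)
    have hδ : log (∑ p ∈ S, log p) - 335 / 1024 ≤ log q := by
      have hq0 : (0 : ℝ) < q := by exact_mod_cast (hS q (mem_insert_self q S)).pos
      have := log_le_log (by linarith) hsum_le
      rw [log_mul hq0.ne' (log_pos (by norm_num)).ne'] at this
      linarith [log_log_four_le]
    rw [sum_insert hq, add_comm (log q), Nat.cast_add, Nat.cast_one]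
    exact log_two_mul_log_lt_step (Nat.cast_nonneg _) hT hδ (ih hSp (by omega))

/-- For all `t ≥ 3`, `W(t-1) < t^{0.96/log log t}`. -/
theorem W_lt (t : ℕ) (ht : 3 ≤ t) :
    (W (t - 1) : ℝ) < (t : ℝ) ^ (0.96 / Real.log (Real.log t)) := by
  set S := (t - 1).primeFactors
  have ht0 : (0 : ℝ) < t := by positivity
  have hlog : 1 < log t := by
    rw [lt_log_iff_exp_lt ht0]
    exact exp_one_lt_d9.trans_le (le_trans (by norm_num) (by exact_mod_cast ht : (3 : ℝ) ≤ t))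
  rw [W_eq_two_pow_card_primeFactors (by omega), Nat.cast_pow, Nat.cast_ofNat]
  refine two_pow_lt_rpow_of_log_two_mul_lt ht0 hlog ?_
  rcases le_or_gt #S 3 with h3 | h4
  · exact log_two_mul_mul_log_lt_of_le_three h3 hlog
  have hS : ∀ p ∈ S, p.Prime := fun p hp ↦ Nat.prime_of_mem_primeFactors hp
  have hsum : ∑ p ∈ S, log p < log t := by
    rw [← log_prod_eq_sum_log hS]
    refine log_lt_log (by exact_mod_cast prod_pos fun p hp ↦ (hS p hp).pos) ?_
    exact_mod_cast (Nat.le_of_dvd (by omega) (Nat.prod_primeFactors_dvd _)).trans_lt (by omega)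
  have he : exp 1 ≤ ∑ p ∈ S, log p := by
    have h := (by decide +kernel : ValidCert 4 7 5475 1717).le_sum_log hS h4
    exact exp_one_lt_d9.le.trans (by norm_num at h ⊢; linarith)
  exact mul_log_lt_mul_of_le (by positivity) he hsum.le (log_two_mul_card_mul_log_sum_log_lt hS h4)
end

section
/- Let n > 1 be an integer that is not a prime power, and let d_1 < ⋯ < d_k < n be divisors of n such that d_i ∤ d_j for all i ≠ j. Then λ(d) := deg(lcm(x^{d_1} − 1, …, x^{d_k} − 1)) satisfies λ(d) ≤ n − φ(n), where φ is Euler's totient function. -/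
open Finset Polynomial

/-!
Each `X ^ dᵢ - 1` is the product of the cyclotomic polynomials `Φₑ` with `e ∣ dᵢ`, and these `e`
are proper divisors of `n`. Hence the lcm divides `(X ^ n - 1) / Φₙ = ∏_{e ∣ n, e < n} Φₑ`,
whose degree is `n - φ(n)`.
-/

theorem Nat.sum_totient_properDivisors (n : ℕ) :
    ∑ e ∈ n.properDivisors, e.totient = n - n.totient := by
  rcases eq_or_ne n 0 with rfl | hn
  · simp
  · have h := Nat.sum_totient n
    rw [← Nat.cons_self_properDivisors hn, Finset.sum_cons] at h
    omega

theorem Polynomial.natDegree_prod_cyclotomic_properDivisors (R : Type*) [CommRing R]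
    [Nontrivial R] (n : ℕ) :
    (∏ e ∈ n.properDivisors, cyclotomic e R).natDegree = n - n.totient := by
  rw [natDegree_prod_of_monic _ _ fun e _ => cyclotomic.monic e R]
  simp only [natDegree_cyclotomic]
  exact Nat.sum_totient_properDivisors n

theorem lambda_le_general (n k : ℕ) (hn : 1 < n)
    (d : Fin k → ℕ) (hdvd : ∀ i, d i ∣ n) (hlt : ∀ i, d i < n) :
    ((Finset.univ : Finset (Fin k)).lcm fun i => (X : Polynomial ℚ) ^ d i - 1).natDegree
      ≤ n - Nat.totient n := by
  have hlcm_dvd : (univ.lcm fun i => (X : ℚ[X]) ^ d i - 1) ∣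
      ∏ e ∈ n.properDivisors, cyclotomic e ℚ :=
    Finset.lcm_dvd fun i _ =>
      X_pow_sub_one_dvd_prod_cyclotomic ℚ (by omega) (hdvd i) (hlt i).ne
  have hprod_ne_zero : ∏ e ∈ n.properDivisors, cyclotomic e ℚ ≠ 0 :=
    (monic_prod_of_monic _ _ fun e _ => cyclotomic.monic e ℚ).ne_zero
  calc _ ≤ (∏ e ∈ n.properDivisors, cyclotomic e ℚ).natDegree :=
        natDegree_le_of_dvd hlcm_dvd hprod_ne_zero
    _ = n - n.totient := natDegree_prod_cyclotomic_properDivisors ℚ n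

/-- Let `n > 1` not be a prime power and `d_1 < ⋯ < d_k < n` be divisors of `n` with
`d_i ∤ d_j` for `i ≠ j`. Then `deg lcm(x^{d_1}-1,…,x^{d_k}-1) ≤ n - φ(n)`. -/
theorem lambda_le (n k : ℕ) (hn : 1 < n) (hnpp : ¬ IsPrimePow n) (hk : 1 < k)
    (d : Fin k → ℕ) (hmono : StrictMono d) (hdvd : ∀ i, d i ∣ n) (hlt : ∀ i, d i < n)
    (hnd : ∀ i j, i ≠ j → ¬ d i ∣ d j) :
    ((Finset.univ : Finset (Fin k)).lcm fun i => (X : Polynomial ℚ) ^ d i - 1).natDegree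
      ≤ n - Nat.totient n :=
  lambda_le_general n k hn d hdvd hlt
end

section
/- If p_1, …, p_t are the distinct prime divisors of n, then the degree of lcm(x^{n/p_1} − 1, …, x^{n/p_t} − 1) equals n − φ(n), where φ is Euler's totient function. -/
/-!
Write `f a = X ^ a - 1`. Over a field `gcd (f a) (f b) = f (gcd a b)`, and `gcd` distributes
over `lcm` in a unique factorization monoid, so the degree of the `lcm` of a family of `f a`'s
satisfies the same inclusion–exclusion recursion as the sum of `φ` over the union of the divisor
sets of the exponents; as `deg f a = a = ∑_{d ∣ a} φ d`, the two agree. For the exponents `n / p`,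
`p ∣ n` prime, that union is the set of proper divisors of `n`, whose totients add up to
`n - φ n`.
-/

open Finset Polynomial

namespace Associates

variable {α : Type*} [CommMonoidWithZero α] [UniqueFactorizationMonoid α]

noncomputable instance : DistribLattice (Associates α) :=
  DistribLattice.ofInfSupLe fun a b c => by
    classical
    nontriviality α
    show (a.factors ⊓ (b.factors ⊔ c.factors).prod.factors).prod ≤
      ((a.factors ⊓ b.factors).prod.factors ⊔ (a.factors ⊓ c.factors).prod.factors).prod
    rw [prod_factors, prod_factors, prod_factors, inf_sup_left]

variable [GCDMonoid α]

theorem mk_gcd (a b : α) : Associates.mk (gcd a b) = .mk a ⊓ .mk b := by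
  obtain ⟨d, hd⟩ := mk_surjective (Associates.mk a ⊓ .mk b)
  have hda : d ∣ a := mk_le_mk_iff_dvd.1 (hd ▸ inf_le_left)
  have hdb : d ∣ b := mk_le_mk_iff_dvd.1 (hd ▸ inf_le_right)
  exact le_antisymm (le_inf (mk_le_mk_of_dvd (gcd_dvd_left a b))
    (mk_le_mk_of_dvd (gcd_dvd_right a b))) (hd ▸ mk_le_mk_of_dvd (dvd_gcd hda hdb))

theorem mk_lcm (a b : α) : Associates.mk (lcm a b) = .mk a ⊔ .mk b := by
  obtain ⟨m, hm⟩ := mk_surjective (Associates.mk a ⊔ .mk b)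
  have ham : a ∣ m := mk_le_mk_iff_dvd.1 (hm ▸ le_sup_left)
  have hbm : b ∣ m := mk_le_mk_iff_dvd.1 (hm ▸ le_sup_right)
  exact le_antisymm (hm ▸ mk_le_mk_of_dvd (lcm_dvd ham hbm))
    (sup_le (mk_le_mk_of_dvd (dvd_lcm_left a b)) (mk_le_mk_of_dvd (dvd_lcm_right a b)))

end Associates

section UniqueFactorizationMonoid

variable {α : Type*} [CommMonoidWithZero α] [UniqueFactorizationMonoid α]
  [NormalizedGCDMonoid α]

theorem gcd_lcm_distrib (a b c : α) : gcd a (lcm b c) = lcm (gcd a b) (gcd a c) := by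
  have h : Associated (gcd a (lcm b c)) (lcm (gcd a b) (gcd a c)) := by
    rw [← Associates.mk_eq_mk_iff_associated]
    simp only [Associates.mk_gcd, Associates.mk_lcm, inf_sup_left]
  exact dvd_antisymm_of_normalize_eq (normalize_gcd _ _) (normalize_lcm _ _) h.dvd h.symm.dvd

theorem gcd_finset_lcm {ι : Type*} (a : α) (s : Finset ι) (f : ι → α) :
    gcd a (s.lcm f) = s.lcm fun i => gcd a (f i) := by
  classical
  induction s using Finset.induction_on with
  | empty => simp
  | insert i s _ ih => rw [lcm_insert, lcm_insert, gcd_lcm_distrib, ih]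

end UniqueFactorizationMonoid

theorem dvd_pow_sub_one_gcd {R : Type*} [CommRing R] {x d : R} {a b : ℕ}
    (ha : d ∣ x ^ a - 1) (hb : d ∣ x ^ b - 1) : d ∣ x ^ Nat.gcd a b - 1 := by
  induction a, b using Nat.gcd.induction with
  | H0 b => simpa using hb
  | H1 a b _ ih =>
    rw [Nat.gcd_rec]
    refine ih ?_ ha
    have hsplit : x ^ b - 1 = x ^ (b % a) * (x ^ (a * (b / a)) - 1) + (x ^ (b % a) - 1) := by
      rw [mul_sub, ← pow_add, add_comm (b % a), Nat.div_add_mod]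
      ring
    have hdvd := hb.sub
      ((ha.trans (pow_one_sub_dvd_pow_mul_sub_one x a (b / a))).mul_left (x ^ (b % a)))
    rwa [hsplit, add_sub_cancel_left] at hdvd

theorem Nat.divisors_inter_divisors {a b : ℕ} (ha : a ≠ 0) (hb : b ≠ 0) :
    a.divisors ∩ b.divisors = (a.gcd b).divisors := by
  ext d
  simp [Nat.dvd_gcd_iff, ha, hb]

theorem Nat.biUnion_primeFactors_divisors_div (n : ℕ) :
    n.primeFactors.biUnion (fun p => (n / p).divisors) = n.properDivisors := by
  ext d
  simp only [mem_biUnion, Nat.mem_divisors, Nat.mem_properDivisors, Nat.mem_primeFactors]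
  constructor
  · rintro ⟨p, ⟨hp, hpn, hn⟩, hd, hnp⟩
    exact ⟨hd.trans (Nat.div_dvd_of_dvd hpn), (Nat.le_of_dvd (Nat.pos_of_ne_zero hnp) hd).trans_lt
      (Nat.div_lt_self (Nat.pos_of_ne_zero hn) hp.one_lt)⟩
  · rintro ⟨hd, hlt⟩
    have hn : n ≠ 0 := by omega
    obtain ⟨p, hp, hpd⟩ :=
      Nat.exists_prime_and_dvd fun h => hlt.ne (Nat.eq_of_dvd_of_div_eq_one hd h)
    have hdp : d * p ∣ n := Nat.mul_dvd_of_dvd_div hd hpd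
    have hpn : p ∣ n := (Dvd.intro_left d rfl).trans hdp
    refine ⟨p, ⟨hp, hpn, hn⟩, Nat.dvd_div_of_mul_dvd (mul_comm d p ▸ hdp), ?_⟩
    exact Nat.div_ne_zero_iff.2 ⟨hp.ne_zero, Nat.le_of_dvd (Nat.pos_of_ne_zero hn) hpn⟩

theorem Nat.sum_properDivisors_totient (n : ℕ) :
    ∑ d ∈ n.properDivisors, d.totient = n - n.totient := by
  rcases eq_or_ne n 0 with rfl | hn
  · simp
  · have h := Nat.sum_totient n
    rw [← Nat.cons_self_properDivisors hn, sum_cons] at h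
    omega

section Field

variable {F : Type*} [Field F]

theorem monic_X_pow_sub_one {a : ℕ} (ha : a ≠ 0) : ((X : F[X]) ^ a - 1).Monic := by
  simpa using monic_X_pow_sub_C (1 : F) ha

theorem natDegree_X_pow_sub_one (a : ℕ) : ((X : F[X]) ^ a - 1).natDegree = a := by
  simpa using natDegree_X_pow_sub_C (n := a) (r := (1 : F))

variable [DecidableEq F]

theorem normalize_X_pow_sub_one (a : ℕ) : normalize ((X : F[X]) ^ a - 1) = X ^ a - 1 := by
  rcases eq_or_ne a 0 with rfl | ha
  · simp
  · exact (monic_X_pow_sub_one ha).normalize_eq_self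

theorem gcd_X_pow_sub_one (a b : ℕ) :
    GCDMonoid.gcd ((X : F[X]) ^ a - 1) (X ^ b - 1) = X ^ Nat.gcd a b - 1 :=
  dvd_antisymm_of_normalize_eq (normalize_gcd _ _) (normalize_X_pow_sub_one _)
    (dvd_pow_sub_one_gcd (gcd_dvd_left _ _) (gcd_dvd_right _ _))
    (dvd_gcd (dvd_pow_sub_one_of_dvd (Nat.gcd_dvd_left a b))
      (dvd_pow_sub_one_of_dvd (Nat.gcd_dvd_right a b)))

theorem natDegree_gcd_add_natDegree_lcm {p q : F[X]} (hp : p ≠ 0) (hq : q ≠ 0) :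
    (GCDMonoid.gcd p q).natDegree + (GCDMonoid.lcm p q).natDegree = p.natDegree + q.natDegree := by
  rw [← natDegree_mul (gcd_ne_zero_of_left hp) (lcm_ne_zero_iff.2 ⟨hp, hq⟩),
    ← natDegree_mul hp hq]
  exact natDegree_eq_of_degree_eq (degree_eq_degree_of_associated (gcd_mul_lcm p q))

theorem natDegree_finset_lcm_X_pow_sub_one {ι : Type*} (s : Finset ι) (a : ι → ℕ)
    (ha : ∀ i ∈ s, a i ≠ 0) :
    (s.lcm fun i => (X : F[X]) ^ a i - 1).natDegree =
      ∑ d ∈ s.biUnion fun i => (a i).divisors, d.totient := by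
  classical
  induction s using Finset.induction_on generalizing a with
  | empty => simp
  | insert i s _ ih =>
    have hai : a i ≠ 0 := ha i (mem_insert_self i s)
    have has : ∀ j ∈ s, a j ≠ 0 := fun j hj => ha j (mem_insert_of_mem hj)
    have hL : (s.lcm fun j => (X : F[X]) ^ a j - 1) ≠ 0 := by
      simp only [Ne, Finset.lcm_eq_zero_iff, not_exists, not_and]
      exact fun j hj => (monic_X_pow_sub_one (has j hj)).ne_zero
    have hgcd : GCDMonoid.gcd ((X : F[X]) ^ a i - 1) (s.lcm fun j => X ^ a j - 1) =
        s.lcm fun j => X ^ Nat.gcd (a i) (a j) - 1 := by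
      simp only [gcd_finset_lcm, gcd_X_pow_sub_one]
    have hinter : (a i).divisors ∩ s.biUnion (fun j => (a j).divisors) =
        s.biUnion fun j => (Nat.gcd (a i) (a j)).divisors := by
      rw [inter_biUnion]
      exact biUnion_congr rfl fun j hj => Nat.divisors_inter_divisors hai (has j hj)
    have hdeg := natDegree_gcd_add_natDegree_lcm (monic_X_pow_sub_one hai).ne_zero hL
    rw [hgcd, ih _ fun j _ => Nat.gcd_ne_zero_left hai, ih a has, natDegree_X_pow_sub_one,
      ← hinter] at hdeg
    have hsum := sum_union_inter (s₁ := (a i).divisors)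
      (s₂ := s.biUnion fun j => (a j).divisors) (f := Nat.totient)
    rw [Nat.sum_totient] at hsum
    rw [lcm_insert, biUnion_insert]
    omega

end Field

theorem deg_lcm_eq_general (n : ℕ) (F : Type*) [Field F] [DecidableEq F] :
    (n.primeFactors.lcm fun p => (X : Polynomial F) ^ (n / p) - 1).natDegree
      = n - Nat.totient n := by
  have hdiv : ∀ p ∈ n.primeFactors, n / p ≠ 0 := fun p hp =>
    Nat.div_ne_zero_iff.2
      ⟨(Nat.prime_of_mem_primeFactors hp).ne_zero, Nat.le_of_mem_primeFactors hp⟩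
  rw [natDegree_finset_lcm_X_pow_sub_one _ _ hdiv, Nat.biUnion_primeFactors_divisors_div,
    Nat.sum_properDivisors_totient]

/-- If `p_1, …, p_t` are the distinct prime divisors of `n`, then
`deg lcm(x^{n/p_1}-1, …, x^{n/p_t}-1) = n - φ(n)`, over any field. -/
theorem deg_lcm_eq (n : ℕ) (hn : 1 < n) (F : Type*) [Field F] [DecidableEq F] :
    (n.primeFactors.lcm fun p => (X : Polynomial F) ^ (n / p) - 1).natDegree
      = n - Nat.totient n :=
  deg_lcm_eq_general n F
end

section
/- Let q be a prime power, n = 2N with N > 1 odd. There exists b ∈ F_{q^2} with Tr_{N/1}-compatibility such that the pair (b, 0) ∈ F_{q^2} × F_{q^N} is (2,N)-admissible (i.e., Tr_{2/1}(b) = Tr_{N/1}(0) = 0), yet no primitive element α ∈ F_{q^n} satisfies both Tr_{n/2}(α) = b and Tr_{n/N}(α) = 0. -/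
open Finset

/-- `Tr q N d α = ∑_{i=0}^{N/d-1} α^{q^{d·i}}`, the trace from `F_{q^N}` to `F_{q^d}`. -/
noncomputable def Tr (q N d : ℕ) {K : Type*} [Field K] (α : K) : K :=
  ∑ i ∈ Finset.range (N / d), α ^ q ^ (d * i)

/-- A primitive element: a generator of the multiplicative group of the finite field. -/
def IsPrimitiveElement {K : Type*} [Field K] (α : K) : Prop :=
  α ≠ 0 ∧ ∀ β : K, β ≠ 0 → ∃ m : ℕ, β = α ^ m

/-!
Take `b = 0`. If `Tr_{n/N}(α) = α + α^{q^N}` vanishes, then `α^{q^N - 1} = -1`, so the order of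
`α` divides `2 (q^N - 1)`. This is smaller than `q^{2N} - 1`, the order of a primitive element.
-/

section

variable {K : Type*} [Field K]

theorem Tr_zero {q : ℕ} (hq : q ≠ 0) (N d : ℕ) : Tr q N d (0 : K) = 0 :=
  sum_eq_zero fun _ _ => zero_pow (pow_ne_zero _ hq)

theorem Tr_two_mul_self (q : ℕ) {N : ℕ} (hN : 0 < N) (α : K) :
    Tr q (2 * N) N α = α + α ^ q ^ N := by
  simp [Tr, Nat.mul_div_cancel 2 hN, sum_range_succ, mul_comm N]

theorem IsPrimitiveElement.orderOf_eq [Fintype K] {α : K} (hα : IsPrimitiveElement α) :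
    orderOf α = Fintype.card K - 1 := by
  classical
  obtain ⟨hα0, hgen⟩ := hα
  have hmem (v : Kˣ) : v ∈ Subgroup.zpowers (Units.mk0 α hα0) := by
    obtain ⟨m, hm⟩ := hgen v v.ne_zero
    exact ⟨m, Units.ext (by simp [← hm])⟩
  rw [← Units.val_mk0 hα0, orderOf_units, orderOf_eq_card_of_forall_mem_zpowers hmem,
    Nat.card_eq_fintype_card, Fintype.card_units]

theorem IsPrimitiveElement.pow_ne_neg [Fintype K] {Q : ℕ} (hK : Fintype.card K = Q ^ 2)
    {α : K} (hα : IsPrimitiveElement α) : α ^ Q ≠ -α := by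
  intro hαQ
  have hQ : 2 ≤ Q := by
    have hcard : 1 < Q ^ 2 := hK ▸ Fintype.one_lt_card
    nlinarith
  have hneg : α ^ (Q - 1) = -1 := by
    refine mul_right_cancel₀ hα.1 ?_
    rw [← pow_succ, Nat.sub_add_cancel (by omega), hαQ, neg_one_mul]
  have hdvd : orderOf α ∣ 2 * (Q - 1) :=
    orderOf_dvd_of_pow_eq_one (by rw [mul_comm, pow_mul, hneg, neg_one_sq])
  rw [hα.orderOf_eq, hK] at hdvd
  have hle := Nat.le_of_dvd (by omega) hdvd
  have hQQ : Q * 2 ≤ Q * Q := Nat.mul_le_mul_left Q hQ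
  rw [sq] at hle
  omega

end

theorem genuine_exception_general (q N : ℕ) (hq : IsPrimePow q) (hN : 1 < N)
    (K : Type*) [Field K] [Fintype K] (hK : Fintype.card K = q ^ (2 * N)) :
    ∃ b : K, b ^ q ^ 2 = b ∧ Tr q 2 1 b = 0 ∧
      ¬ ∃ α : K, IsPrimitiveElement α ∧ Tr q (2 * N) 2 α = b ∧ Tr q (2 * N) N α = 0 := by
  have hq0 : q ≠ 0 := hq.pos.ne'
  refine ⟨0, zero_pow (pow_ne_zero 2 hq0), Tr_zero hq0 2 1, ?_⟩
  rintro ⟨α, hα, -, htr⟩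
  rw [Tr_two_mul_self q (by omega)] at htr
  exact hα.pow_ne_neg (by rw [hK, pow_mul']) (eq_neg_of_add_eq_zero_right htr)

/-- For `n = 2N`, `N > 1` odd, there is `b ∈ F_{q^2}` such that `(b,0)` is `(2,N)`-admissible
(`Tr_{2/1}(b) = 0`), yet no primitive `α ∈ F_{q^n}` has `Tr_{n/2}(α) = b` and
`Tr_{n/N}(α) = 0`. -/
theorem genuine_exception (q N : ℕ) (hq : IsPrimePow q) (hN : 1 < N) (hodd : Odd N)
    (K : Type*) [Field K] [Fintype K] (hK : Fintype.card K = q ^ (2 * N)) :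
    ∃ b : K, b ^ q ^ 2 = b ∧ Tr q 2 1 b = 0 ∧
      ¬ ∃ α : K, IsPrimitiveElement α ∧ Tr q (2 * N) 2 α = b ∧ Tr q (2 * N) N α = 0 :=
  genuine_exception_general q N hq hN K hK
end
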